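/- Let L be a field, A an associative unital L-algebra, and V a nonzero A-module which is simple and whose A-module endomorphisms consist exactly of the scalar multiplications by elements of L. Then for every field extension K of L, the base change V ⊗_L K is a simple module over the K-algebra A ⊗_L K. -/

import Mathlib

/-!
Since every `A`-endomorphism of `V` is a scalar from `L`, the Jacobson density theorem lets `A`
act on any finite subset of `V` as an arbitrary `L`-linear map. Write a nonzero `x` in an
`A ⊗ K`-submodule `N` as `∑ bᵢ ⊗ cᵢ` over an `L`-basis `(bᵢ)` of `V`, and pick `a ∈ A` acting on
the `bᵢ` occurring in `x` as the projection onto `L ∙ bᵢ` for one `i` with `cᵢ ≠ 0`. Then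
`a • x = bᵢ ⊗ cᵢ`, so `bᵢ ⊗ 1 ∈ N`, and as `A • bᵢ = V` by simplicity, `N` contains every
`w ⊗ k`.
-/

open TensorProduct

section BaseChange

variable (L : Type*) [Field L] (K : Type*) [Field K] [Algebra L K]
variable (A : Type*) [Ring A] [Algebra L A]
variable (V : Type*) [AddCommGroup V] [Module L V] [Module A V] [IsScalarTower L A V]

/-- The action of `K` on the base change `V ⊗[L] K` through the right tensor factor,
packaged as a ring homomorphism into `L`-linear endomorphisms. -/
noncomputable def rightMulHom : K →+* Module.End L (V ⊗[L] K) where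
  toFun k := LinearMap.lTensor V (LinearMap.mulLeft L k)
  map_one' := by
    show LinearMap.lTensor V (LinearMap.mulLeft L (1 : K)) = 1
    rw [LinearMap.mulLeft_one, LinearMap.lTensor_id, Module.End.one_eq_id]
  map_mul' k₁ k₂ := by
    show LinearMap.lTensor V (LinearMap.mulLeft L (k₁ * k₂)) =
      LinearMap.lTensor V (LinearMap.mulLeft L k₁) * LinearMap.lTensor V (LinearMap.mulLeft L k₂)
    rw [LinearMap.mulLeft_mul, LinearMap.lTensor_comp, Module.End.mul_eq_comp]
  map_zero' := by
    show LinearMap.lTensor V (LinearMap.mulLeft L (0 : K)) = 0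
    rw [LinearMap.mulLeft_zero_eq_zero, LinearMap.lTensor_zero]
  map_add' k₁ k₂ := by
    have h : LinearMap.mulLeft L (k₁ + k₂) =
        LinearMap.mulLeft L k₁ + LinearMap.mulLeft L k₂ := by
      ext x; simp [add_mul]
    show LinearMap.lTensor V (LinearMap.mulLeft L (k₁ + k₂)) =
      LinearMap.lTensor V (LinearMap.mulLeft L k₁) + LinearMap.lTensor V (LinearMap.mulLeft L k₂)
    rw [h, LinearMap.lTensor_add]

/-- `K` acts on the base change `V ⊗[L] K` through the right tensor factor. -/
noncomputable instance rightModule : Module K (V ⊗[L] K) :=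
  Module.compHom _ (rightMulHom L K V)

variable {L K V}

theorem rightSmul_tmul (k : K) (v : V) (c : K) :
    k • (v ⊗ₜ[L] c) = v ⊗ₜ[L] (k * c) := rfl

variable (L K V)

instance : IsScalarTower L K (V ⊗[L] K) where
  smul_assoc l k x := by
    induction x using TensorProduct.induction_on with
    | zero => simp
    | tmul v c =>
      rw [rightSmul_tmul, smul_mul_assoc, tmul_smul, rightSmul_tmul]
    | add x y hx hy => simp only [smul_add, hx, hy]

instance : SMulCommClass A K (V ⊗[L] K) where
  smul_comm a k x := by
    induction x using TensorProduct.induction_on with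
    | zero => simp
    | tmul v c =>
      rw [rightSmul_tmul, smul_tmul', smul_tmul', rightSmul_tmul]
    | add x y hx hy => simp only [smul_add, hx, hy]

/-- The base change `V ⊗[L] K` is a module over the base-changed algebra `A ⊗[L] K`. -/
noncomputable instance : Module (A ⊗[L] K) (V ⊗[L] K) :=
  TensorProduct.Algebra.module

theorem exists_smul_eq_of_forall_end_eq_smul {R S M : Type*} [CommSemiring R] [Ring S]
    [Algebra R S] [AddCommGroup M] [Module R M] [Module S M] [IsScalarTower R S M]
    [IsSemisimpleModule S M] (hEnd : ∀ g : M →ₗ[S] M, ∃ c : R, ∀ m, g m = c • m)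
    (f : M →ₗ[R] M) (s : Finset M) : ∃ a : S, ∀ m ∈ s, f m = a • m :=
  jacobson_density
    { toFun := f
      map_add' := f.map_add
      map_smul' := fun g m ↦ by
        obtain ⟨c, hc⟩ := hEnd g
        simp [Module.End.smul_def, hc] } s

variable {L K A V}

theorem tmul_one_smul (a : A) (x : V ⊗[L] K) : (a ⊗ₜ[L] (1 : K)) • x = a • x := by
  rw [TensorProduct.Algebra.smul_def, one_smul]

theorem one_tmul_smul (k : K) (x : V ⊗[L] K) : ((1 : A) ⊗ₜ[L] k) • x = k • x := by
  rw [TensorProduct.Algebra.smul_def, one_smul]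

theorem exists_tmul_one_mem_of_ne_bot [IsSemisimpleModule A V]
    (hEnd : ∀ g : V →ₗ[A] V, ∃ c : L, ∀ v, g v = c • v)
    {N : Submodule (A ⊗[L] K) (V ⊗[L] K)} (hN : N ≠ ⊥) :
    ∃ v : V, v ≠ 0 ∧ v ⊗ₜ[L] (1 : K) ∈ N := by
  classical
  obtain ⟨x, hxN, hx⟩ := N.ne_bot_iff.mp hN
  let b := Module.Basis.ofVectorSpace L V
  obtain ⟨c, rfl⟩ := TensorProduct.eq_repr_basis_left b x
  obtain ⟨i, hi⟩ : c.support.Nonempty :=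
    Finsupp.support_nonempty_iff.mpr (by rintro rfl; simp at hx)
  obtain ⟨a, ha⟩ := exists_smul_eq_of_forall_end_eq_smul hEnd ((b.coord i).smulRight (b i))
    (c.support.image b)
  have hax : a • c.sum (fun j k ↦ b j ⊗ₜ[L] k) = b i ⊗ₜ[L] c i := by
    rw [Finsupp.sum, Finset.smul_sum, Finset.sum_eq_single_of_mem i hi]
    · rw [smul_tmul', ← ha _ (Finset.mem_image_of_mem b hi)]
      simp
    · intro j hj hji
      rw [smul_tmul', ← ha _ (Finset.mem_image_of_mem b hj)]
      simp [Finsupp.single_eq_of_ne' hji]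
  refine ⟨b i, b.ne_zero i, ?_⟩
  have := N.smul_mem ((1 : A) ⊗ₜ[L] (c i)⁻¹) (N.smul_mem (a ⊗ₜ[L] (1 : K)) hxN)
  rwa [tmul_one_smul, one_tmul_smul, hax, rightSmul_tmul,
    inv_mul_cancel₀ (Finsupp.mem_support_iff.mp hi)] at this

theorem eq_top_of_tmul_one_mem [IsSimpleModule A V] {N : Submodule (A ⊗[L] K) (V ⊗[L] K)}
    {v : V} (hv : v ≠ 0) (hvN : v ⊗ₜ[L] (1 : K) ∈ N) : N = ⊤ := by
  refine N.eq_top_iff'.mpr fun x ↦ ?_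
  induction x using TensorProduct.induction_on with
  | zero => exact N.zero_mem
  | tmul w k =>
    obtain ⟨a, rfl⟩ := IsSimpleModule.toSpanSingleton_surjective A hv w
    have := N.smul_mem (a ⊗ₜ[L] k) hvN
    rwa [TensorProduct.Algebra.smul_def, rightSmul_tmul, mul_one, smul_tmul'] at this
  | add x y hx hy => exact N.add_mem hx hy

/-- Let `L` be a field, `A` an associative unital `L`-algebra, and `V` a nonzero
`A`-module which is simple and whose `A`-module endomorphisms are exactly the scalar
multiplications by elements of `L`.  Then for every field extension `K` of `L`, the
base change `V ⊗[L] K` is a simple module over the `K`-algebra `A ⊗[L] K`. -/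
theorem stmt7 (hsimple : IsSimpleModule A V)
    (hEnd : ∀ f : V →ₗ[A] V, ∃ c : L, ∀ v : V, f v = c • v) :
    IsSimpleModule (A ⊗[L] K) (V ⊗[L] K) := by
  have : Nontrivial V := IsSimpleModule.nontrivial A V
  refine (isSimpleModule_iff ..).mpr ⟨fun N ↦ or_iff_not_imp_left.mpr fun hN ↦ ?_⟩
  obtain ⟨v, hv, hvN⟩ := exists_tmul_one_mem_of_ne_bot hEnd hN
  exact eq_top_of_tmul_one_mem hv hvN

end BaseChange
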